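/- arXiv:1808.10528 — 2 statements merged into one kernel-verified Lean document; each statement's English description precedes it below -/
import Mathlib

section
/- For all complex-valued f₀, f₁ ∈ L²(ℝ³) vanishing outside Ω and all k ∈ ℂ, |I₁(k)| ≤ 16π·|∂Ω|·D·( (|k|³/3)·‖f₁‖²_{L²} + (|k|⁵/5)·‖f₀‖²_{L²} )·e^{2D|Im k|}. -/
open MeasureTheory Metric Complex Set Filter

noncomputable section

abbrev E3 := EuclideanSpace ℝ (Fin 3)

/-- Directional derivative along the `i`-th coordinate direction. -/
def pd {F : Type*} [NormedAddCommGroup F] [NormedSpace ℝ F] (i : Fin 3) (f : E3 → F) : E3 → F :=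
  fun x => fderiv ℝ f x (EuclideanSpace.single i (1:ℝ))

/-- Iterated partial derivative `∂^α f` for a multi-index `α`. -/
def mderiv3 {F : Type*} [NormedAddCommGroup F] [NormedSpace ℝ F] (α : Fin 3 → ℕ) (f : E3 → F) : E3 → F :=
  ((pd 0)^[α 0] ∘ (pd 1)^[α 1] ∘ (pd 2)^[α 2]) f

/-- Squared Sobolev `H^m` norm: `∑_{|α| ≤ m} ∫ |∂^α f|²`. -/
def sobSq {F : Type*} [NormedAddCommGroup F] [NormedSpace ℝ F] (m : ℕ) (f : E3 → F) : ℝ :=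
  ∑ α ∈ (Fintype.piFinset fun _ : Fin 3 => Finset.range (m+1)).filter (fun α => α 0 + α 1 + α 2 ≤ m),
    ∫ x : E3, ‖mderiv3 α f x‖^2

/-- Laplacian on `ℝ³`. -/
def lap3 {F : Type*} [NormedAddCommGroup F] [NormedSpace ℝ F] (f : E3 → F) : E3 → F :=
  fun x => ∑ i : Fin 3, pd i (pd i f) x

/-- Surface measure: 2-dimensional Hausdorff measure restricted to the topological boundary. -/
def bms (Ω : Set E3) : Measure E3 := (μH[2]).restrict (frontier Ω)

/-- Bounded `C²` domain. -/
def IsC2Domain (Ω : Set E3) : Prop :=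
  Bornology.IsBounded Ω ∧ IsOpen Ω ∧
  ∃ φ : E3 → ℝ, ContDiff ℝ 2 φ ∧ Ω = {x | φ x < 0} ∧
    frontier Ω = {x | φ x = 0} ∧ ∀ x ∈ frontier Ω, fderiv ℝ φ x ≠ 0

/-- Squared `H^{-1}` norm (dual characterization). -/
def negOneSq (f : E3 → ℂ) : ℝ :=
  (sSup {r : ℝ | ∃ φ : E3 → ℂ, ContDiff ℝ (⊤ : ℕ∞) φ ∧ HasCompactSupport φ ∧ sobSq 1 φ ≤ 1 ∧
      r = ‖∫ x : E3, f x * (starRingEnd ℂ) (φ x)‖}) ^ 2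

/-- Sommerfeld radiation condition: `lim_{r→∞} sup_{|x|=r} r·|x/|x|·∇u − i k u| = 0`. -/
def Sommerfeld (u : E3 → ℂ) (k : ℂ) : Prop :=
  Tendsto (fun r : ℝ =>
      sSup ((fun x : E3 =>
        r * ‖(∑ i : Fin 3, ((x i / ‖x‖ : ℝ) : ℂ) * pd i u x) - Complex.I * k * u x‖) ''
        sphere (0:E3) r))
    atTop (nhds 0)

/-- `v⁺(x,ω) = ∫_Ω (f₁+iωf₀)(y) e^{iω|x−y|}/|x−y| dy`. -/
def vpl (Ω : Set E3) (f₀ f₁ : E3 → ℂ) (x : E3) (ω : ℂ) : ℂ :=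
  ∫ y in Ω, (f₁ y + Complex.I * ω * f₀ y) * Complex.exp (Complex.I * ω * (‖x - y‖ : ℂ)) / (‖x - y‖ : ℂ)

/-- `v⁻(x,ω) = ∫_Ω (f₁−iωf₀)(y) e^{−iω|x−y|}/|x−y| dy`. -/
def vmi (Ω : Set E3) (f₀ f₁ : E3 → ℂ) (x : E3) (ω : ℂ) : ℂ :=
  ∫ y in Ω, (f₁ y - Complex.I * ω * f₀ y) * Complex.exp (-(Complex.I * ω * (‖x - y‖ : ℂ))) / (‖x - y‖ : ℂ)

/-- `I₀(k) = 2k ∫₀¹ ∫_{∂Ω} v⁺(x,ks) v⁻(x,ks) dσ(x) ds`. -/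
def I0 (Ω : Set E3) (f₀ f₁ : E3 → ℂ) (k : ℂ) : ℂ :=
  2 * k * ∫ s in (0:ℝ)..1, ∫ x, vpl Ω f₀ f₁ x (k * s) * vmi Ω f₀ f₁ x (k * s) ∂(bms Ω)

/-- `I₁(k) = 2k³ ∫₀¹ s² ∫_{∂Ω} v⁺(x,ks) v⁻(x,ks) dσ(x) ds`. -/
def I1 (Ω : Set E3) (f₀ f₁ : E3 → ℂ) (k : ℂ) : ℂ :=
  2 * k^3 * ∫ s in (0:ℝ)..1, (s:ℂ)^2 * ∫ x, vpl Ω f₀ f₁ x (k * s) * vmi Ω f₀ f₁ x (k * s) ∂(bms Ω)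



lemma volE3 : (volume (Metric.ball (0:E3) 1)).toReal = 4 / 3 * Real.pi := by
  rw [EuclideanSpace.volume_ball]
  have e1 : ((Fintype.card (Fin 3) : ℝ) / 2 + 1) = 3/2 + 1 := by
    simp [Fintype.card_fin]
  have hsqrt : Real.sqrt Real.pi ^ 2 = Real.pi := Real.sq_sqrt Real.pi_nonneg
  have hpos : 0 < Real.sqrt Real.pi := Real.sqrt_pos.2 Real.pi_pos
  have hG : Real.Gamma ((Fintype.card (Fin 3) : ℝ) / 2 + 1) = 3/4 * Real.sqrt Real.pi := by
    rw [e1, Real.Gamma_add_one (by norm_num)]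
    have : (3:ℝ)/2 = 1/2 + 1 := by norm_num
    rw [this, Real.Gamma_add_one (by norm_num), Real.Gamma_one_half_eq]
    ring
  have hval : Real.sqrt Real.pi ^ Fintype.card (Fin 3) /
      Real.Gamma ((Fintype.card (Fin 3) : ℝ) / 2 + 1) = 4 / 3 * Real.pi := by
    rw [hG]
    have h3 : Real.sqrt Real.pi ^ Fintype.card (Fin 3) = Real.pi * Real.sqrt Real.pi := by
      simp only [Fintype.card_fin]
      rw [pow_succ, hsqrt]
    rw [h3]
    field_simp
  rw [hval]
  simp [ENNReal.toReal_ofReal (by positivity : (0:ℝ) ≤ 4/3*Real.pi)]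

lemma radial_le (D : ℝ) (hD : 0 ≤ D) (f : ℝ → ℝ) (hf : Measurable f)
    (hnn : ∀ r, 0 ≤ f r)
    (hbd : ∀ r ∈ Set.Ioi (0:ℝ), r ^ 2 * f r ≤ (Set.Ioc (0:ℝ) D).indicator (fun _ => (1:ℝ)) r) :
    ∫ x : E3, f ‖x‖ ≤ 4 * Real.pi * D := by
  rw [MeasureTheory.integral_fun_norm_addHaar volume f]
  have hdim : Module.finrank ℝ E3 = 3 := by
    simp [finrank_euclideanSpace]
  rw [hdim, measureReal_def, volE3]
  have hind : Integrable ((Set.Ioc (0:ℝ) D).indicator (fun _ => (1:ℝ)))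
      (volume.restrict (Set.Ioi (0:ℝ))) := by
    rw [integrable_indicator_iff measurableSet_Ioc]
    exact integrableOn_const ((Measure.restrict_apply_le _ _).trans_lt measure_Ioc_lt_top).ne
  have h1 : ∫ y in Set.Ioi (0:ℝ), y ^ (3-1) • f y ≤ D := by
    have step : ∫ y in Set.Ioi (0:ℝ), y ^ (3-1) • f y ≤
        ∫ y in Set.Ioi (0:ℝ), (Set.Ioc (0:ℝ) D).indicator (fun _ => (1:ℝ)) y := by
      refine integral_mono_of_nonneg ?_ hind ?_
      · exact Filter.Eventually.of_forall fun y => by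
          simp only [smul_eq_mul]
          exact mul_nonneg (by simpa using sq_nonneg y) (hnn y)
      · filter_upwards [ae_restrict_mem measurableSet_Ioi] with y hy
        simpa [smul_eq_mul] using hbd y hy
    refine step.trans ?_
    rw [integral_indicator_const _ measurableSet_Ioc]
    rw [measureReal_def, Measure.restrict_apply measurableSet_Ioc]
    have hins : Set.Ioc (0:ℝ) D ∩ Set.Ioi 0 = Set.Ioc (0:ℝ) D :=
      Set.inter_eq_left.2 (fun r hr => hr.1)
    rw [hins, Real.volume_Ioc, ENNReal.toReal_ofReal (by linarith : (0:ℝ) ≤ D - 0)]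
    simp
  calc (3:ℕ) • (4/3*Real.pi) • ∫ y in Set.Ioi (0:ℝ), y ^ (3-1) • f y
      = 4 * Real.pi * ∫ y in Set.Ioi (0:ℝ), y ^ (3-1) • f y := by
        simp only [nsmul_eq_mul, smul_eq_mul]; ring
    _ ≤ 4 * Real.pi * D := by
        have : (0:ℝ) ≤ 4 * Real.pi := by positivity
        exact mul_le_mul_of_nonneg_left h1 this


lemma invsq (D : ℝ) (hD : 0 ≤ D) (x : E3) :
    IntegrableOn (fun y : E3 => (‖x - y‖⁻¹) ^ 2) (Metric.closedBall x D) volume ∧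
    ∫ y in Metric.closedBall x D, (‖x - y‖⁻¹) ^ 2 ≤ 4 * Real.pi * D := by
  set G : E3 → ℝ := (Metric.closedBall (0:E3) D).indicator (fun z => (‖z‖⁻¹)^2) with hG
  have hGmeas : Measurable G :=
    ((measurable_norm.inv).pow_const 2).indicator measurableSet_closedBall
  have hGnn : ∀ z, 0 ≤ G z := fun z => Set.indicator_nonneg (fun w _ => by positivity) z
  set A : ℕ → Set E3 := fun n => Metric.closedBall (0:E3) D \ Metric.ball 0 (1/((n:ℝ)+1)) with hA
  set Gn : ℕ → E3 → ℝ := fun n => (A n).indicator (fun z => (‖z‖⁻¹)^2) with hGn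
  have hAmeas : ∀ n, MeasurableSet (A n) := fun n =>
    measurableSet_closedBall.diff measurableSet_ball
  have hGnmeas : ∀ n, Measurable (Gn n) := fun n =>
    ((measurable_norm.inv).pow_const 2).indicator (hAmeas n)
  have hGn_le_G : ∀ n z, Gn n z ≤ G z := fun n z =>
    Set.indicator_le_indicator_of_subset Set.diff_subset (fun w => by positivity) z
  have hGnnn : ∀ n z, 0 ≤ Gn n z := fun n z => Set.indicator_nonneg (fun w _ => by positivity) z
  have hmono : ∀ z, Monotone (fun n => Gn n z) := by
    intro z m n hmn
    refine Set.indicator_le_indicator_of_subset ?_ (fun w => by positivity) z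
    refine Set.diff_subset_diff_right (Metric.ball_subset_ball ?_)
    have h1 : (m:ℝ) + 1 ≤ (n:ℝ) + 1 := by exact_mod_cast Nat.succ_le_succ hmn
    exact one_div_le_one_div_of_le (by positivity) h1
  have hint_n : ∀ n, Integrable (Gn n) := by
    intro n
    have hbound : Integrable ((Metric.closedBall (0:E3) D).indicator (fun _ => ((n:ℝ)+1)^2)) :=
      (integrable_indicator_iff measurableSet_closedBall).2
        (integrableOn_const measure_closedBall_lt_top.ne)
    refine Integrable.mono' hbound ((hGnmeas n).aestronglyMeasurable)
      (Filter.Eventually.of_forall fun z => ?_)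
    rw [Real.norm_of_nonneg (hGnnn n z)]
    by_cases hz : z ∈ A n
    · have h1 : 1/((n:ℝ)+1) ≤ ‖z‖ := by
        have := hz.2
        simpa [Metric.mem_ball, dist_zero_right, not_lt] using this
      have h2 : ‖z‖⁻¹ ≤ (n:ℝ)+1 := by
        have hpos : (0:ℝ) < 1/((n:ℝ)+1) := by positivity
        calc ‖z‖⁻¹ ≤ (1/((n:ℝ)+1))⁻¹ := by
              exact inv_anti₀ hpos h1
          _ = (n:ℝ)+1 := by rw [one_div, inv_inv]
      calc Gn n z = (‖z‖⁻¹)^2 := by simp only [hGn, Set.indicator_of_mem hz]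
        _ ≤ ((n:ℝ)+1)^2 := by
            exact pow_le_pow_left₀ (by positivity) h2 2
        _ = (Metric.closedBall (0:E3) D).indicator (fun _ => ((n:ℝ)+1)^2) z :=
            (Set.indicator_of_mem hz.1 (fun _ => ((n:ℝ)+1)^2)).symm
    · simp only [hGn, Set.indicator_of_notMem hz]
      exact Set.indicator_nonneg (fun w _ => by positivity) z
  have hint_val : ∀ n, (∫ z, Gn n z) ≤ 4*Real.pi*D := by
    intro n
    set fn : ℝ → ℝ := fun r => if 1/((n:ℝ)+1) ≤ r ∧ r ≤ D then (r⁻¹)^2 else 0 with hfn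
    have heq : Gn n = fun z => fn ‖z‖ := by
      funext z
      by_cases hz : z ∈ A n
      · have h1 : 1/((n:ℝ)+1) ≤ ‖z‖ ∧ ‖z‖ ≤ D := by
          constructor
          · simpa [Metric.mem_ball, dist_zero_right, not_lt] using hz.2
          · simpa [Metric.mem_closedBall, dist_zero_right] using hz.1
        simp only [hGn, Set.indicator_of_mem hz, hfn, if_pos h1]
      · have h1 : ¬(1/((n:ℝ)+1) ≤ ‖z‖ ∧ ‖z‖ ≤ D) := by
          intro hc
          exact hz ⟨by simpa [Metric.mem_closedBall, dist_zero_right] using hc.2,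
            by simpa [Metric.mem_ball, dist_zero_right, not_lt] using hc.1⟩
        simp only [hGn, Set.indicator_of_notMem hz, hfn, if_neg h1]
    simp only [heq]
    refine radial_le D hD fn ?_ ?_ ?_
    · exact Measurable.ite
        (measurableSet_Icc : MeasurableSet (Set.Icc (1/((n:ℝ)+1)) D))
        (measurable_inv.pow_const 2) measurable_const
    · intro r
      simp only [hfn]
      split
      · positivity
      · exact le_rfl
    · intro r hr
      simp only [hfn]
      by_cases hc : 1/((n:ℝ)+1) ≤ r ∧ r ≤ D
      · rw [if_pos hc]
        have hr0 : r ≠ 0 := ne_of_gt hr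
        have h1 : r ^ 2 * (r⁻¹)^2 = 1 := by
          rw [← mul_pow, mul_inv_cancel₀ hr0, one_pow]
        rw [h1, Set.indicator_of_mem (Set.mem_Ioc.2 ⟨hr, hc.2⟩)]
      · rw [if_neg hc, mul_zero]
        exact Set.indicator_nonneg (fun w _ => zero_le_one) r
  have hsup : ∀ z, (⨆ n, ENNReal.ofReal (Gn n z)) = ENNReal.ofReal (G z) := by
    intro z
    rcases eq_or_ne z 0 with rfl | hz
    · have hGz : G 0 = 0 := by
        by_cases h : (0:E3) ∈ Metric.closedBall (0:E3) D
        · simp only [hG, Set.indicator_of_mem h]; simp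
        · simp only [hG, Set.indicator_of_notMem h]
      have hGnz : ∀ n, Gn n 0 = 0 := by
        intro n
        have : (0:E3) ∉ A n := by
          intro hc
          exact hc.2 (by simp [Metric.mem_ball]; positivity)
        simp only [hGn, Set.indicator_of_notMem this]
      simp [hGz, hGnz]
    · by_cases hzD : z ∈ Metric.closedBall (0:E3) D
      · have hzpos : 0 < ‖z‖ := norm_pos_iff.2 hz
        obtain ⟨n, hn⟩ := exists_nat_one_div_lt hzpos
        refine le_antisymm (iSup_le fun m => ENNReal.ofReal_le_ofReal (hGn_le_G m z)) ?_
        have hzA : z ∈ A n := by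
          refine ⟨hzD, ?_⟩
          simp only [Metric.mem_ball, dist_zero_right, not_lt]
          exact hn.le
        have hGG : G z = Gn n z := by
          simp only [hG, hGn, Set.indicator_of_mem hzD, Set.indicator_of_mem hzA]
        rw [hGG]
        exact le_iSup (fun n => ENNReal.ofReal (Gn n z)) n
      · have h1 : G z = 0 := Set.indicator_of_notMem hzD _
        have h2 : ∀ n, Gn n z = 0 := fun n => Set.indicator_of_notMem (fun hc => hzD hc.1) _
        simp [h1, h2]
  have hlin : (∫⁻ z, ENNReal.ofReal (G z)) ≤ ENNReal.ofReal (4*Real.pi*D) := by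
    have hstep : (∫⁻ z, ENNReal.ofReal (G z)) = ⨆ n, ∫⁻ z, ENNReal.ofReal (Gn n z) := by
      rw [← lintegral_iSup (fun n => (hGnmeas n).ennreal_ofReal)
        (fun m n hmn z => ENNReal.ofReal_le_ofReal (hmono z hmn))]
      exact lintegral_congr fun z => (hsup z).symm
    rw [hstep]
    refine iSup_le fun n => ?_
    rw [← ofReal_integral_eq_lintegral_ofReal (hint_n n) (Filter.Eventually.of_forall (hGnnn n))]
    exact ENNReal.ofReal_le_ofReal (hint_val n)
  have hGint : Integrable G := by
    refine ⟨hGmeas.aestronglyMeasurable, ?_⟩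
    rw [hasFiniteIntegral_iff_ofReal (Filter.Eventually.of_forall hGnn)]
    exact hlin.trans_lt ENNReal.ofReal_lt_top
  have hGval : (∫ z, G z) ≤ 4*Real.pi*D := by
    have h1 := ofReal_integral_eq_lintegral_ofReal hGint (Filter.Eventually.of_forall hGnn)
    have h2 : ENNReal.ofReal (∫ z, G z) ≤ ENNReal.ofReal (4*Real.pi*D) := h1 ▸ hlin
    exact (ENNReal.ofReal_le_ofReal_iff (by positivity)).1 h2
  have htrans : ∀ y : E3, G (y - x) =
      (Metric.closedBall x D).indicator (fun y => (‖x - y‖⁻¹)^2) y := by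
    intro y
    by_cases hy : y ∈ Metric.closedBall x D
    · have h1 : y - x ∈ Metric.closedBall (0:E3) D := by
        simpa [Metric.mem_closedBall, dist_eq_norm, dist_zero_right] using hy
      simp only [hG, Set.indicator_of_mem h1, Set.indicator_of_mem hy]
      rw [norm_sub_rev]
    · have h1 : y - x ∉ Metric.closedBall (0:E3) D := by
        intro hc
        apply hy
        rw [Metric.mem_closedBall, dist_eq_norm]
        simpa [Metric.mem_closedBall, dist_zero_right] using hc
      simp only [hG, Set.indicator_of_notMem h1, Set.indicator_of_notMem hy]
  have hcomp : Integrable (fun y => G (y - x)) := hGint.comp_sub_right x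
  have hIeq : Integrable ((Metric.closedBall x D).indicator (fun y => (‖x - y‖⁻¹)^2)) :=
    hcomp.congr (Filter.Eventually.of_forall htrans)
  constructor
  · exact (integrable_indicator_iff measurableSet_closedBall).1 hIeq
  · have heq2 : ∫ y in Metric.closedBall x D, (‖x - y‖⁻¹) ^ 2 = ∫ y, G (y - x) := by
      rw [← integral_indicator measurableSet_closedBall]
      exact integral_congr_ae (Filter.Eventually.of_forall fun y => (htrans y).symm)
    rw [heq2, integral_sub_right_eq_self G x]
    exact hGval

lemma holder_bound (Ω : Set E3) (hb : Bornology.IsBounded Ω) (ho : IsOpen Ω) {x : E3}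
    (hx : x ∈ closure Ω) (F u : E3 → ℂ) (hF : MeasureTheory.MemLp F 2 volume) (ec : ℝ)
    (hec : 0 ≤ ec) (hu : ∀ y ∈ Ω, ‖u y‖ ≤ ec) :
    ‖∫ y in Ω, F y * u y / (‖x - y‖ : ℂ)‖ ≤
      Real.sqrt (∫ y, ‖F y‖^2) * Real.sqrt (ec^2 * (4 * Real.pi * Metric.diam Ω)) := by
  set D := Metric.diam Ω with hDdef
  have hD : 0 ≤ D := Metric.diam_nonneg
  have hsub : Ω ⊆ Metric.closedBall x D := by
    intro y hy
    rw [Metric.mem_closedBall]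
    have h1 : dist y x ≤ Metric.diam (closure Ω) :=
      Metric.dist_le_diam_of_mem hb.closure (subset_closure hy) hx
    rwa [Metric.diam_closure] at h1
  obtain ⟨hKint, hKle⟩ := invsq D hD x
  set g : E3 → ℝ := fun y => ‖F y‖ with hgdef
  set h : E3 → ℝ := fun y => ec * ‖x - y‖⁻¹ with hhdef
  have hgnn : ∀ y, 0 ≤ g y := fun y => norm_nonneg _
  have hhnn : ∀ y, 0 ≤ h y := fun y => mul_nonneg hec (by positivity)
  have hg2 : MeasureTheory.MemLp g 2 (volume.restrict Ω) := (hF.norm).restrict Ω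
  have hhsq : IntegrableOn (fun y => h y ^ 2) Ω volume := by
    have h1 : IntegrableOn (fun y => ec^2 * (‖x - y‖⁻¹)^2) Ω volume :=
      ((hKint.mono_set hsub).const_mul (ec^2))
    refine h1.congr_fun (fun y _ => by simp only [hhdef]; ring) ho.measurableSet
  have hhmeas : AEStronglyMeasurable h (volume.restrict Ω) :=
    ((((continuous_const.sub continuous_id).norm).measurable).inv.const_mul ec).aestronglyMeasurable
  have hh2 : MeasureTheory.MemLp h 2 (volume.restrict Ω) :=
    (memLp_two_iff_integrable_sq hhmeas).2 hhsq
  -- pointwise bound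
  have hpt : ∀ᵐ y ∂(volume.restrict Ω), ‖F y * u y / (‖x - y‖ : ℂ)‖ ≤ g y * h y := by
    filter_upwards [ae_restrict_mem ho.measurableSet] with y hy
    rw [norm_div, norm_mul]
    have hnr : ‖((‖x - y‖ : ℝ) : ℂ)‖ = ‖x - y‖ := by
      rw [Complex.norm_real, Real.norm_of_nonneg (norm_nonneg _)]
    rw [hnr, div_eq_mul_inv, mul_assoc]
    refine mul_le_mul_of_nonneg_left ?_ (norm_nonneg _)
    refine mul_le_mul_of_nonneg_right (hu y hy) (by positivity)
  have step1 : ‖∫ y in Ω, F y * u y / (‖x - y‖ : ℂ)‖ ≤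
      ∫ y in Ω, ‖F y * u y / (‖x - y‖ : ℂ)‖ := norm_integral_le_integral_norm _
  have hgh_int : Integrable (fun y => g y * h y) (volume.restrict Ω) := by
    have hbd : Integrable (fun y => (g y ^ 2 + h y ^ 2)/2) (volume.restrict Ω) :=
      (hg2.integrable_sq.add hhsq).div_const 2
    refine Integrable.mono' hbd (hg2.aestronglyMeasurable.mul hh2.aestronglyMeasurable)
      (Filter.Eventually.of_forall fun y => ?_)
    rw [Real.norm_of_nonneg (mul_nonneg (hgnn y) (hhnn y))]
    nlinarith [sq_nonneg (g y - h y)]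
  have step2 : (∫ y in Ω, ‖F y * u y / (‖x - y‖ : ℂ)‖) ≤ ∫ y in Ω, g y * h y :=
    integral_mono_of_nonneg (Filter.Eventually.of_forall fun y => norm_nonneg _) hgh_int hpt
  have hconj : Real.HolderConjugate 2 2 := Real.HolderConjugate.two_two
  have hofReal : (ENNReal.ofReal (2:ℝ)) = (2 : ENNReal) := by
    simp
  have step3 : (∫ y in Ω, g y * h y) ≤
      (∫ y in Ω, g y ^ (2:ℝ)) ^ ((1:ℝ)/2) * (∫ y in Ω, h y ^ (2:ℝ)) ^ ((1:ℝ)/2) := by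
    refine MeasureTheory.integral_mul_le_Lp_mul_Lq_of_nonneg hconj
      (Filter.Eventually.of_forall hgnn) (Filter.Eventually.of_forall hhnn) ?_ ?_
    · rwa [hofReal]
    · rwa [hofReal]
  have hrpow2 : ∀ w : ℝ, w ^ (2:ℝ) = w ^ 2 := fun w => Real.rpow_two w
  have hgle : (∫ y in Ω, g y ^ (2:ℝ)) ≤ ∫ y, ‖F y‖^2 := by
    simp only [hrpow2]
    exact setIntegral_le_integral (hF.norm.integrable_sq)
      (Filter.Eventually.of_forall fun y => sq_nonneg _)
  have hhle : (∫ y in Ω, h y ^ (2:ℝ)) ≤ ec^2 * (4 * Real.pi * D) := by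
    simp only [hrpow2]
    have h1 : (∫ y in Ω, h y ^ 2) = ec^2 * ∫ y in Ω, (‖x - y‖⁻¹)^2 := by
      rw [← integral_const_mul]
      refine setIntegral_congr_fun ho.measurableSet (fun y _ => by simp only [hhdef]; ring)
    rw [h1]
    refine mul_le_mul_of_nonneg_left ?_ (sq_nonneg ec)
    refine le_trans ?_ hKle
    refine setIntegral_mono_set hKint
      (Filter.Eventually.of_forall fun y => by positivity) (HasSubset.Subset.eventuallyLE hsub)
  -- combine
  have hfin : (∫ y in Ω, g y ^ (2:ℝ)) ^ ((1:ℝ)/2) * (∫ y in Ω, h y ^ (2:ℝ)) ^ ((1:ℝ)/2) ≤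
      Real.sqrt (∫ y, ‖F y‖^2) * Real.sqrt (ec^2 * (4 * Real.pi * D)) := by
    rw [← Real.sqrt_eq_rpow, ← Real.sqrt_eq_rpow]
    have h1 : (0:ℝ) ≤ ∫ y in Ω, g y ^ (2:ℝ) := by
      refine integral_nonneg fun y => ?_
      rw [hrpow2]; exact sq_nonneg _
    exact mul_le_mul (Real.sqrt_le_sqrt hgle) (Real.sqrt_le_sqrt hhle)
      (Real.sqrt_nonneg _) (Real.sqrt_nonneg _)
  exact step1.trans (step2.trans (step3.trans hfin))

lemma v_prod_bound (Ω : Set E3) (hb : Bornology.IsBounded Ω) (ho : IsOpen Ω)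
    (f₀ f₁ : E3 → ℂ) (hf₀ : MeasureTheory.MemLp f₀ 2 volume) (hf₁ : MeasureTheory.MemLp f₁ 2 volume)
    {x : E3} (hx : x ∈ frontier Ω) (ω : ℂ) :
    ‖vpl Ω f₀ f₁ x ω * vmi Ω f₀ f₁ x ω‖ ≤
      (2*(∫ y : E3, ‖f₁ y‖^2) + 2*‖ω‖^2*(∫ y : E3, ‖f₀ y‖^2)) *
        (Real.exp (|ω.im| * Metric.diam Ω)^2 * (4*Real.pi*Metric.diam Ω)) := by
  set D := Metric.diam Ω with hDdef
  set T₀ := ∫ y : E3, ‖f₀ y‖^2 with hT₀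
  set T₁ := ∫ y : E3, ‖f₁ y‖^2 with hT₁
  set ec := Real.exp (|ω.im| * D) with hec
  set M := 2*T₁ + 2*‖ω‖^2*T₀ with hM
  have hT₀nn : 0 ≤ T₀ := integral_nonneg fun y => sq_nonneg _
  have hT₁nn : 0 ≤ T₁ := integral_nonneg fun y => sq_nonneg _
  have hMnn : 0 ≤ M := by positivity
  have hD : 0 ≤ D := Metric.diam_nonneg
  have hecnn : 0 ≤ ec := Real.exp_nonneg _
  have hKnn : 0 ≤ ec^2 * (4*Real.pi*D) := by positivity
  have hx' : x ∈ closure Ω := frontier_subset_closure hx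
  have hrange : ∀ y ∈ Ω, ‖x - y‖ ≤ D := by
    intro y hy
    have h1 := Metric.dist_le_diam_of_mem hb.closure hx' (subset_closure hy)
    rw [Metric.diam_closure] at h1
    rwa [dist_eq_norm] at h1
  -- L² bounds on f₁ ± iωf₀
  have key : ∀ F : E3 → ℂ, (∀ y, ‖F y‖ ≤ ‖f₁ y‖ + ‖ω‖ * ‖f₀ y‖) →
      MeasureTheory.MemLp F 2 volume → (∫ y, ‖F y‖^2) ≤ M := by
    intro F hFb hF
    have hint : Integrable (fun y => 2*‖f₁ y‖^2 + 2*‖ω‖^2*‖f₀ y‖^2) volume :=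
      ((hf₁.norm.integrable_sq).const_mul 2).add ((hf₀.norm.integrable_sq).const_mul (2*‖ω‖^2))
    have step : (∫ y, ‖F y‖^2) ≤ ∫ y, (2*‖f₁ y‖^2 + 2*‖ω‖^2*‖f₀ y‖^2) := by
      refine integral_mono_of_nonneg (Filter.Eventually.of_forall fun y => sq_nonneg _) hint
        (Filter.Eventually.of_forall fun y => ?_)
      have h2 := mul_self_le_mul_self (norm_nonneg (F y)) (hFb y)
      have h3 := sq_nonneg (‖f₁ y‖ - ‖ω‖*‖f₀ y‖)
      show ‖F y‖^2 ≤ 2*‖f₁ y‖^2 + 2*‖ω‖^2*‖f₀ y‖^2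
      nlinarith [norm_nonneg (f₁ y), norm_nonneg (f₀ y), norm_nonneg ω]
    refine step.trans_eq ?_
    rw [integral_add ((hf₁.norm.integrable_sq).const_mul 2)
      ((hf₀.norm.integrable_sq).const_mul (2*‖ω‖^2)), integral_const_mul, integral_const_mul]
  -- the two factors
  have hvpl : ‖vpl Ω f₀ f₁ x ω‖ ≤ Real.sqrt M * Real.sqrt (ec^2 * (4*Real.pi*D)) := by
    have hF : MeasureTheory.MemLp (fun y => f₁ y + Complex.I*ω*f₀ y) 2 volume :=
      hf₁.add (hf₀.const_mul (Complex.I*ω))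
    have hu : ∀ y ∈ Ω, ‖Complex.exp (Complex.I * ω * (‖x - y‖ : ℂ))‖ ≤ ec := by
      intro y hy
      rw [Complex.norm_exp]
      refine Real.exp_le_exp.2 ?_
      have hre : (Complex.I * ω * ((‖x - y‖ : ℝ) : ℂ)).re = -(ω.im * ‖x - y‖) := by
        simp [Complex.mul_re, Complex.mul_im]
      rw [hre]
      calc -(ω.im * ‖x - y‖) ≤ |ω.im * ‖x - y‖| := neg_le_abs _
        _ = |ω.im| * ‖x - y‖ := by rw [abs_mul, _root_.abs_of_nonneg (norm_nonneg _)]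
        _ ≤ |ω.im| * D := mul_le_mul_of_nonneg_left (hrange y hy) (abs_nonneg _)
    have h1 := holder_bound Ω hb ho hx' (fun y => f₁ y + Complex.I*ω*f₀ y)
      (fun y => Complex.exp (Complex.I * ω * (‖x - y‖ : ℂ))) hF ec hecnn hu
    have h2 : ‖vpl Ω f₀ f₁ x ω‖ ≤
        Real.sqrt (∫ y, ‖f₁ y + Complex.I*ω*f₀ y‖^2) * Real.sqrt (ec^2 * (4*Real.pi*D)) := by
      simpa [vpl] using h1
    refine h2.trans ?_
    refine mul_le_mul_of_nonneg_right (Real.sqrt_le_sqrt ?_) (Real.sqrt_nonneg _)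
    refine key _ (fun y => ?_) hF
    refine (norm_add_le _ _).trans ?_
    have h3 : ‖Complex.I*ω*f₀ y‖ = ‖ω‖*‖f₀ y‖ := by
      rw [norm_mul, norm_mul, Complex.norm_I, one_mul]
    rw [h3]
  have hvmi : ‖vmi Ω f₀ f₁ x ω‖ ≤ Real.sqrt M * Real.sqrt (ec^2 * (4*Real.pi*D)) := by
    have hF : MeasureTheory.MemLp (fun y => f₁ y - Complex.I*ω*f₀ y) 2 volume :=
      hf₁.sub (hf₀.const_mul (Complex.I*ω))
    have hu : ∀ y ∈ Ω, ‖Complex.exp (-(Complex.I * ω * (‖x - y‖ : ℂ)))‖ ≤ ec := by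
      intro y hy
      rw [Complex.norm_exp]
      refine Real.exp_le_exp.2 ?_
      have hre : (-(Complex.I * ω * ((‖x - y‖ : ℝ) : ℂ))).re = ω.im * ‖x - y‖ := by
        simp [Complex.mul_re, Complex.mul_im]
      rw [hre]
      calc ω.im * ‖x - y‖ ≤ |ω.im * ‖x - y‖| := le_abs_self _
        _ = |ω.im| * ‖x - y‖ := by rw [abs_mul, _root_.abs_of_nonneg (norm_nonneg _)]
        _ ≤ |ω.im| * D := mul_le_mul_of_nonneg_left (hrange y hy) (abs_nonneg _)
    have h1 := holder_bound Ω hb ho hx' (fun y => f₁ y - Complex.I*ω*f₀ y)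
      (fun y => Complex.exp (-(Complex.I * ω * (‖x - y‖ : ℂ)))) hF ec hecnn hu
    have h2 : ‖vmi Ω f₀ f₁ x ω‖ ≤
        Real.sqrt (∫ y, ‖f₁ y - Complex.I*ω*f₀ y‖^2) * Real.sqrt (ec^2 * (4*Real.pi*D)) := by
      simpa [vmi] using h1
    refine h2.trans ?_
    refine mul_le_mul_of_nonneg_right (Real.sqrt_le_sqrt ?_) (Real.sqrt_nonneg _)
    refine key _ (fun y => ?_) hF
    refine (norm_sub_le _ _).trans ?_
    have h3 : ‖Complex.I*ω*f₀ y‖ = ‖ω‖*‖f₀ y‖ := by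
      rw [norm_mul, norm_mul, Complex.norm_I, one_mul]
    rw [h3]
  rw [norm_mul]
  calc ‖vpl Ω f₀ f₁ x ω‖ * ‖vmi Ω f₀ f₁ x ω‖
      ≤ (Real.sqrt M * Real.sqrt (ec^2 * (4*Real.pi*D))) *
        (Real.sqrt M * Real.sqrt (ec^2 * (4*Real.pi*D))) :=
        mul_le_mul hvpl hvmi (norm_nonneg _) (by positivity)
    _ = M * (ec^2 * (4*Real.pi*D)) := by
        rw [mul_mul_mul_comm, Real.mul_self_sqrt hMnn, Real.mul_self_sqrt hKnn]

set_option maxHeartbeats 1000000 in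
/-- Bound on the analytic continuation of `I₁`. -/
theorem I1_bound (Ω : Set E3) (hb : Bornology.IsBounded Ω) (ho : IsOpen Ω)
    (hσ : (μH[2] : Measure E3) (frontier Ω) < ⊤)
    (f₀ f₁ : E3 → ℂ) (hf₀ : MeasureTheory.MemLp f₀ 2 volume) (hf₁ : MeasureTheory.MemLp f₁ 2 volume)
    (hs₀ : ∀ x ∉ Ω, f₀ x = 0) (hs₁ : ∀ x ∉ Ω, f₁ x = 0) (k : ℂ) :
    ‖I1 Ω f₀ f₁ k‖ ≤
      16 * Real.pi * ((μH[2] : Measure E3) (frontier Ω)).toReal * diam Ω *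
        (‖k‖^3 / 3 * (∫ x : E3, ‖f₁ x‖^2) + ‖k‖^5 / 5 * (∫ x : E3, ‖f₀ x‖^2)) *
        Real.exp (2 * diam Ω * |k.im|) := by
  set D := Metric.diam Ω with hDdef
  set T₀ := ∫ x : E3, ‖f₀ x‖^2 with hT₀
  set T₁ := ∫ x : E3, ‖f₁ x‖^2 with hT₁
  set σR := ((μH[2] : Measure E3) (frontier Ω)).toReal with hσR
  have hT₀nn : 0 ≤ T₀ := integral_nonneg fun y => sq_nonneg _
  have hT₁nn : 0 ≤ T₁ := integral_nonneg fun y => sq_nonneg _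
  have hD : 0 ≤ D := Metric.diam_nonneg
  have hσRnn : 0 ≤ σR := ENNReal.toReal_nonneg
  haveI : IsFiniteMeasure (bms Ω) := by
    constructor
    show ((μH[2] : Measure E3).restrict (frontier Ω)) Set.univ < ⊤
    rw [Measure.restrict_apply_univ]
    exact hσ
  have hbmsuniv : ((bms Ω) Set.univ).toReal = σR := by
    show (((μH[2] : Measure E3).restrict (frontier Ω)) Set.univ).toReal = σR
    rw [Measure.restrict_apply_univ]
  clear_value T₀ T₁ σR
  set E := Real.exp (|k.im| * D)^2 * (4*Real.pi*D) with hE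
  have hEnn : 0 ≤ E := by positivity
  clear_value E
  have hsurf : ∀ s ∈ Set.Ioc (0:ℝ) 1,
      ‖∫ x, vpl Ω f₀ f₁ x (k*s) * vmi Ω f₀ f₁ x (k*s) ∂(bms Ω)‖ ≤
        (2*T₁ + 2*‖k‖^2*s^2*T₀) * E * σR := by
    intro s hs
    have hC : ∀ᵐ x ∂(bms Ω), ‖vpl Ω f₀ f₁ x (k*s) * vmi Ω f₀ f₁ x (k*s)‖ ≤
        (2*T₁ + 2*‖k‖^2*s^2*T₀) * E := by
      have hae : ∀ᵐ x ∂(bms Ω), x ∈ frontier Ω :=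
        ae_restrict_mem isClosed_frontier.measurableSet
      filter_upwards [hae] with x hxf
      have h1 := v_prod_bound Ω hb ho f₀ f₁ hf₀ hf₁ hxf (k*s)
      rw [← hDdef, ← hT₀, ← hT₁] at h1
      refine h1.trans ?_
      have him : |(k*(s:ℂ)).im| = |k.im| * s := by
        have h2 : (k*(s:ℂ)).im = k.im * s := by
          simp [Complex.mul_im]
        rw [h2, abs_mul, _root_.abs_of_nonneg hs.1.le]
      have hnm : ‖k*(s:ℂ)‖^2 = ‖k‖^2 * s^2 := by
        rw [norm_mul, Complex.norm_real, Real.norm_of_nonneg hs.1.le, mul_pow]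
      rw [him, hnm]
      have hexp : Real.exp (|k.im| * s * D) ≤ Real.exp (|k.im| * D) := by
        refine Real.exp_le_exp.2 ?_
        calc |k.im| * s * D ≤ |k.im| * 1 * D :=
              mul_le_mul_of_nonneg_right (mul_le_mul_of_nonneg_left hs.2 (abs_nonneg _)) hD
          _ = |k.im| * D := by ring
      refine mul_le_mul (le_of_eq (by ring)) ?_ (by positivity) (by positivity)
      rw [hE]
      refine mul_le_mul_of_nonneg_right ?_ (by positivity)
      exact pow_le_pow_left₀ (Real.exp_nonneg _) hexp 2
    have h3 := norm_integral_le_of_norm_le_const hC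
    rw [measureReal_def, hbmsuniv] at h3
    exact h3
  set a := 2*T₁*E*σR with ha
  set b := 2*‖k‖^2*T₀*E*σR with hbdef
  have hann : 0 ≤ a := by positivity
  have hbnn : 0 ≤ b := by positivity
  set g : ℝ → ℝ := fun s => a*s^2 + b*s^4 with hg
  have hgbound : ∀ᵐ s ∂(volume.restrict (Set.uIoc (0:ℝ) 1)),
      ‖((s:ℝ):ℂ)^2 * ∫ x, vpl Ω f₀ f₁ x (k*s) * vmi Ω f₀ f₁ x (k*s) ∂(bms Ω)‖ ≤ g s := by
    have huIoc : Set.uIoc (0:ℝ) 1 = Set.Ioc 0 1 := Set.uIoc_of_le zero_le_one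
    rw [huIoc]
    filter_upwards [ae_restrict_mem measurableSet_Ioc] with s hs
    rw [norm_mul]
    have h2 : ‖((s:ℝ):ℂ)^2‖ = s^2 := by
      rw [norm_pow, Complex.norm_real, Real.norm_of_nonneg hs.1.le]
    rw [h2]
    calc s^2 * ‖∫ x, vpl Ω f₀ f₁ x (k*s) * vmi Ω f₀ f₁ x (k*s) ∂(bms Ω)‖
        ≤ s^2 * ((2*T₁ + 2*‖k‖^2*s^2*T₀) * E * σR) :=
          mul_le_mul_of_nonneg_left (hsurf s hs) (sq_nonneg s)
      _ = g s := by rw [hg, ha, hbdef]; ring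
  have hgint : IntervalIntegrable g volume 0 1 :=
    (((continuous_const.mul (continuous_pow 2)).add
      (continuous_const.mul (continuous_pow 4)))).intervalIntegrable 0 1
  have hgval : (∫ s in (0:ℝ)..1, g s) = a/3 + b/5 := by
    rw [hg]
    show (∫ s in (0:ℝ)..1, a * s^2 + b * s^4) = a/3 + b/5
    rw [intervalIntegral.integral_add (f := fun s : ℝ => a * s^2) (g := fun s : ℝ => b * s^4)
      ((continuous_const.mul (continuous_pow 2)).intervalIntegrable 0 1)
      ((continuous_const.mul (continuous_pow 4)).intervalIntegrable 0 1),
      intervalIntegral.integral_const_mul, intervalIntegral.integral_const_mul,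
      integral_pow, integral_pow]
    norm_num
    ring
  have hI := (intervalIntegral.norm_integral_le_of_norm_le zero_le_one
    (by rw [Set.uIoc_of_le zero_le_one] at hgbound
        exact (ae_restrict_iff' measurableSet_Ioc).1 hgbound) hgint).trans (le_abs_self _)
  rw [hgval] at hI
  have hIabs : |a/3 + b/5| = a/3 + b/5 := _root_.abs_of_nonneg (by positivity)
  rw [hIabs] at hI
  have hunfold : I1 Ω f₀ f₁ k = 2 * k^3 *
      ∫ s in (0:ℝ)..1, (s:ℂ)^2 * ∫ x, vpl Ω f₀ f₁ x (k*s) * vmi Ω f₀ f₁ x (k*s) ∂(bms Ω) := rfl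
  rw [hunfold, norm_mul, norm_mul, norm_pow]
  have hn2 : ‖(2:ℂ)‖ = 2 := by simp
  rw [hn2]
  have hexp2 : Real.exp (|k.im| * D)^2 = Real.exp (2 * D * |k.im|) := by
    rw [sq, ← Real.exp_add]
    congr 1
    ring
  calc 2 * ‖k‖^3 *
      ‖∫ s in (0:ℝ)..1, (s:ℂ)^2 * ∫ x, vpl Ω f₀ f₁ x (k*s) * vmi Ω f₀ f₁ x (k*s) ∂(bms Ω)‖
      ≤ 2 * ‖k‖^3 * (a/3 + b/5) := by
        refine mul_le_mul_of_nonneg_left hI (by positivity)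
    _ = 16 * Real.pi * σR * D * (‖k‖^3/3*T₁ + ‖k‖^5/5*T₀) * Real.exp (2*D*|k.im|) := by
        rw [ha, hbdef, hE, ← hexp2]
        ring
end
end

section
/- Let D > 0, K > 1 and E > 1 be real numbers with π(D+1)E^{−1/4} < 1 and 2^{1/4}K^{1/3} < E^{1/4}, and set k = K^{2/3}E^{1/4}. Then exp( 2(D+1)k − (2/π)·((k/K)⁴ − 1)^{−1/2}·E ) ≤ (3π³/4) · ( K² · E^{3/2} · (1 − π(D+1)E^{−1/4})³ )^{−1}. -/
/-!
With `u = K^{1/3}` and `v = E^{1/4}` we have `k = u²v`, `k/K = v/u` and every power in the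
statement is an integer power of `u` or `v`. Since `((v/u)⁴ - 1)^{-1/2} ≥ (u/v)²`, the exponent
is at most `2(D+1)u²v - (2/π)u²v² = -y` with `y = (2/π)u²v²(1 - π(D+1)/v) > 0`, and
`e^{-y} ≤ 6/y³` is exactly the right-hand side.
-/

open Real

theorem exp_neg_le_six_div_pow_three {y : ℝ} (hy : 0 < y) : exp (-y) ≤ 6 / y ^ 3 := by
  have hcube : y ^ 3 / 6 ≤ exp y := by
    simpa [Nat.factorial] using pow_div_factorial_le_exp y hy.le 3
  rw [exp_neg, inv_le_comm₀ (exp_pos y) (by positivity), inv_div]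
  exact hcube

theorem inv_sq_le_rpow_neg_half_pow_four_sub_one {t : ℝ} (ht : 1 < t) :
    (t ^ 2)⁻¹ ≤ (t ^ 4 - 1) ^ (-(1:ℝ)/2) := by
  have ht4 : 1 < t ^ 4 := one_lt_pow₀ ht (by norm_num)
  have hpow : (t ^ 4) ^ (-(1:ℝ)/2) = (t ^ 2)⁻¹ := by
    rw [show t ^ 4 = (t ^ 2) ^ (2:ℝ) by norm_cast; ring, ← rpow_mul (by positivity)]
    norm_num [rpow_neg_one]
  rw [← hpow]
  exact rpow_le_rpow_of_nonpos (by linarith) (by linarith) (by norm_num)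

theorem key_arithmetic_estimate_of_roots {a u v : ℝ} (hu : 0 < u) (huv : u < v)
    (ha : π * a * v⁻¹ < 1) :
    exp (2 * a * (u ^ 2 * v) - (2 / π) * ((u ^ 2 * v / u ^ 3) ^ 4 - 1) ^ (-(1:ℝ)/2) * v ^ 4) ≤
      (3 * π ^ 3 / 4) * ((u ^ 3) ^ 2 * v ^ 6 * (1 - π * a * v⁻¹) ^ 3)⁻¹ := by
  have hv : 0 < v := hu.trans huv
  set y := (2 / π) * u ^ 2 * v ^ 2 * (1 - π * a * v⁻¹) with hy_def
  have hy : 0 < y := by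
    have : 0 < 1 - π * a * v⁻¹ := by linarith
    positivity [pi_pos]
  have hratio : u ^ 2 * v / u ^ 3 = v / u := by field_simp
  have hharm : u ^ 2 / v ^ 2 ≤ ((v / u) ^ 4 - 1) ^ (-(1:ℝ)/2) := by
    simpa [div_pow] using inv_sq_le_rpow_neg_half_pow_four_sub_one ((one_lt_div hu).2 huv)
  have hexponent :
      2 * a * (u ^ 2 * v) - (2 / π) * ((v / u) ^ 4 - 1) ^ (-(1:ℝ)/2) * v ^ 4 ≤ -y := by
    calc _ ≤ 2 * a * (u ^ 2 * v) - (2 / π) * (u ^ 2 / v ^ 2) * v ^ 4 := by gcongr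
      _ = -y := by rw [hy_def]; field_simp; ring
  calc _ ≤ exp (-y) := by rw [hratio]; exact exp_le_exp.2 hexponent
    _ ≤ 6 / y ^ 3 := exp_neg_le_six_div_pow_three hy
    _ = _ := by rw [hy_def]; field_simp; ring

theorem key_arithmetic_estimate_general (D K E k : ℝ) (hK : 1 < K) (hE : 1 < E)
    (h1 : Real.pi * (D + 1) * E ^ (-(1:ℝ)/4) < 1)
    (h2 : (2:ℝ) ^ ((1:ℝ)/4) * K ^ ((1:ℝ)/3) < E ^ ((1:ℝ)/4))
    (hk : k = K ^ ((2:ℝ)/3) * E ^ ((1:ℝ)/4)) :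
    Real.exp (2 * (D + 1) * k - (2 / Real.pi) * ((k / K)^4 - 1) ^ (-(1:ℝ)/2) * E) ≤
      (3 * Real.pi^3 / 4) *
        (K^2 * E ^ ((3:ℝ)/2) * (1 - Real.pi * (D + 1) * E ^ (-(1:ℝ)/4))^3)⁻¹ := by
  have hK0 : 0 ≤ K := by linarith
  have hE0 : 0 ≤ E := by linarith
  set u := K ^ ((1:ℝ)/3)
  set v := E ^ ((1:ℝ)/4)
  have hu : 0 < u := rpow_pos_of_pos (by linarith) _
  have huv : u < v :=
    (le_mul_of_one_le_left hu.le (one_le_rpow (by norm_num) (by norm_num))).trans_lt h2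
  have hKu : K = u ^ 3 := by rw [← rpow_mul_natCast hK0]; norm_num
  have hEv : E = v ^ 4 := by rw [← rpow_mul_natCast hE0]; norm_num
  have hku : k = u ^ 2 * v := by rw [hk, ← rpow_mul_natCast hK0]; norm_num
  have hEneg : E ^ (-(1:ℝ)/4) = v⁻¹ := by rw [← rpow_neg hE0]; norm_num
  have hE32 : E ^ ((3:ℝ)/2) = v ^ 6 := by rw [← rpow_mul_natCast hE0]; norm_num
  clear_value u v
  rw [hEneg] at h1 ⊢
  rw [hE32, hku, hKu, hEv]
  exact key_arithmetic_estimate_of_roots hu huv h1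

/-- The key arithmetic estimate combining the harmonic-measure lower bound with the
choice `k = K^{2/3} E^{1/4}` and the elementary inequality `e^{−y} ≤ 6/y³`. -/
theorem key_arithmetic_estimate (D K E k : ℝ) (hD : 0 < D) (hK : 1 < K) (hE : 1 < E)
    (h1 : Real.pi * (D + 1) * E ^ (-(1:ℝ)/4) < 1)
    (h2 : (2:ℝ) ^ ((1:ℝ)/4) * K ^ ((1:ℝ)/3) < E ^ ((1:ℝ)/4))
    (hk : k = K ^ ((2:ℝ)/3) * E ^ ((1:ℝ)/4)) :
    Real.exp (2 * (D + 1) * k - (2 / Real.pi) * ((k / K)^4 - 1) ^ (-(1:ℝ)/2) * E) ≤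
      (3 * Real.pi^3 / 4) *
        (K^2 * E ^ ((3:ℝ)/2) * (1 - Real.pi * (D + 1) * E ^ (-(1:ℝ)/4))^3)⁻¹ :=
  key_arithmetic_estimate_general D K E k hK hE h1 h2 hk
end
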